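/- arXiv:1705.00722 — 5 statements merged into one kernel-verified Lean document; each statement's English description precedes it below -/
import Mathlib

section
/- Let Σ be a symmetric positive definite d×d real matrix, R a symmetric positive definite k×k real matrix, H a k×d real matrix, μ ∈ ℝ^d, y, c ∈ ℝ^k, and set S = H Σ Hᵀ + R, K = Σ Hᵀ S⁻¹, ỹ = y − c + H μ, and Σ̂ = (Σ⁻¹ + Hᵀ R⁻¹ H)⁻¹. Then Σ̂ (Σ⁻¹ μ + Hᵀ R⁻¹ ỹ) = μ + K (y − c). -/
/-!
Multiply the Kalman-form mean by the information matrix `J = V⁻¹ + Hᵀ R⁻¹ H`. The push-through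
identity `J (V Hᵀ) = Hᵀ R⁻¹ (H V Hᵀ + R)` gives `J K = Hᵀ R⁻¹`, hence
`J (μ + K (y − c)) = V⁻¹ μ + Hᵀ R⁻¹ (H μ + y − c)`, and it remains to cancel `J`, which is
invertible, as are `V`, `R` and `S`, by positive definiteness.
-/

open Matrix

namespace Matrix

variable {m n α : Type*} [Fintype m] [Fintype n] [DecidableEq m] [DecidableEq n] [CommRing α]
  {V : Matrix n n α} {R : Matrix m m α} {B : Matrix n m α} {H : Matrix m n α}

theorem inv_add_mul_inv_mul_mul_gain (hV : IsUnit V.det) (hR : IsUnit R.det)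
    (hS : IsUnit (H * V * B + R).det) :
    (V⁻¹ + B * R⁻¹ * H) * (V * B * (H * V * B + R)⁻¹) = B * R⁻¹ := by
  have push_through : (V⁻¹ + B * R⁻¹ * H) * (V * B) = B * R⁻¹ * (H * V * B + R) := by
    rw [Matrix.add_mul, Matrix.mul_add, nonsing_inv_mul_cancel_left _ _ hV,
      nonsing_inv_mul_cancel_right _ _ hR, add_comm]
    simp only [Matrix.mul_assoc]
  rw [← Matrix.mul_assoc, push_through, mul_nonsing_inv_cancel_right _ _ hS]

theorem inv_add_mul_inv_mul_mulVec (hV : IsUnit V.det) (hR : IsUnit R.det)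
    (hS : IsUnit (H * V * B + R).det) (hJ : IsUnit (V⁻¹ + B * R⁻¹ * H).det)
    (μ : n → α) (e : m → α) :
    (V⁻¹ + B * R⁻¹ * H)⁻¹ *ᵥ (V⁻¹ *ᵥ μ + B *ᵥ (R⁻¹ *ᵥ (e + H *ᵥ μ))) =
      μ + (V * B * (H * V * B + R)⁻¹) *ᵥ e := by
  have kalman_form :
      (V⁻¹ + B * R⁻¹ * H) *ᵥ (μ + (V * B * (H * V * B + R)⁻¹) *ᵥ e) =
        V⁻¹ *ᵥ μ + B *ᵥ (R⁻¹ *ᵥ (e + H *ᵥ μ)) := by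
    rw [mulVec_add, mulVec_mulVec, inv_add_mul_inv_mul_mul_gain hV hR hS]
    simp only [add_mulVec, mulVec_add, mulVec_mulVec, Matrix.mul_assoc]
    abel
  rw [← kalman_form, mulVec_mulVec, nonsing_inv_mul _ hJ, one_mulVec]

end Matrix

theorem ekf_posterior_mean_identity_general
    {d k : ℕ}
    (V : Matrix (Fin d) (Fin d) ℝ) (hVpd : V.PosDef)
    (R : Matrix (Fin k) (Fin k) ℝ) (hRpd : R.PosDef)
    (H : Matrix (Fin k) (Fin d) ℝ)
    (μ : Fin d → ℝ) (y c : Fin k → ℝ)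
    (S : Matrix (Fin k) (Fin k) ℝ) (hS : S = H * V * Hᵀ + R)
    (K : Matrix (Fin d) (Fin k) ℝ) (hK : K = V * Hᵀ * S⁻¹)
    (ytil : Fin k → ℝ) (hy : ytil = y - c + H *ᵥ μ)
    (Vhat : Matrix (Fin d) (Fin d) ℝ) (hVhat : Vhat = (V⁻¹ + Hᵀ * R⁻¹ * H)⁻¹) :
    Vhat *ᵥ (V⁻¹ *ᵥ μ + Hᵀ *ᵥ (R⁻¹ *ᵥ ytil)) = μ + K *ᵥ (y - c) := by
  have hHt : Hᴴ = Hᵀ := conjTranspose_eq_transpose_of_trivial H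
  have hSpd : (H * V * Hᵀ + R).PosDef :=
    hHt ▸ PosDef.posSemidef_add (hVpd.posSemidef.mul_mul_conjTranspose_same H) hRpd
  have hJpd : (V⁻¹ + Hᵀ * R⁻¹ * H).PosDef :=
    hHt ▸ hVpd.inv.add_posSemidef (hRpd.inv.posSemidef.conjTranspose_mul_mul_same H)
  subst hS hK hy hVhat
  exact inv_add_mul_inv_mul_mulVec hVpd.det_pos.ne'.isUnit hRpd.det_pos.ne'.isUnit
    hSpd.det_pos.ne'.isUnit hJpd.det_pos.ne'.isUnit μ (y - c)

/-- **EKF posterior-mean identity (Corollary 2).**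
With `S = H V Hᵀ + R`, `K = V Hᵀ S⁻¹`, `ỹ = y − c + H μ`, and
`Σ̂ = (V⁻¹ + Hᵀ R⁻¹ H)⁻¹`, the information-form mean
`Σ̂ (V⁻¹ μ + Hᵀ R⁻¹ ỹ)` equals the Kalman-form mean `μ + K (y − c)`. -/
theorem ekf_posterior_mean_identity
    {d k : ℕ}
    (V : Matrix (Fin d) (Fin d) ℝ) (hVsymm : V.IsSymm) (hVpd : V.PosDef)
    (R : Matrix (Fin k) (Fin k) ℝ) (hRsymm : R.IsSymm) (hRpd : R.PosDef)
    (H : Matrix (Fin k) (Fin d) ℝ)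
    (μ : Fin d → ℝ) (y c : Fin k → ℝ)
    (S : Matrix (Fin k) (Fin k) ℝ) (hS : S = H * V * Hᵀ + R)
    (K : Matrix (Fin d) (Fin k) ℝ) (hK : K = V * Hᵀ * S⁻¹)
    (ytil : Fin k → ℝ) (hy : ytil = y - c + H *ᵥ μ)
    (Vhat : Matrix (Fin d) (Fin d) ℝ) (hVhat : Vhat = (V⁻¹ + Hᵀ * R⁻¹ * H)⁻¹) :
    Vhat *ᵥ (V⁻¹ *ᵥ μ + Hᵀ *ᵥ (R⁻¹ *ᵥ ytil)) = μ + K *ᵥ (y - c) :=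
  ekf_posterior_mean_identity_general V hVpd R hRpd H μ y c S hS K hK ytil hy Vhat hVhat
end

section
/- Let f : ℝ^d → ℝ be a bounded measurable function, Σ a symmetric positive definite d×d real matrix, and let N(μ, Σ) denote the multivariate Gaussian with mean μ and covariance Σ. Then the map μ ↦ ∫ f(x) dN(μ,Σ)(x) is differentiable on ℝ^d, and its gradient is ∇_μ ∫ f(x) dN(μ,Σ)(x) = ∫ f(x) Σ⁻¹ (x − μ) dN(μ,Σ)(x). -/
/-! Write `∫ f dN(m, V) = ∫ f(x) φ_{m,V}(x) dx` and differentiate under the integral sign: the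
`m`-derivative of the density is `φ_{m,V}(x) V⁻¹(x - m)`. Positive definiteness of `V⁻¹` gives
`φ_{m,V}(x) ≤ K exp(-c‖x - m‖²)`, so for `m` within distance `1` of `μ` the factor
`φ_{m,V}(x) ‖x - m‖` is dominated by a multiple of `exp(-(c/4)‖x - μ‖²)`, uniformly in `m`;
with `f` bounded this is the domination that dominated differentiation needs. -/

open MeasureTheory Matrix

/-- Density of the multivariate Gaussian `N(a, C)` with mean `a` and
symmetric positive definite covariance `C`. -/
noncomputable def gaussPdf {ι : Type*} [Fintype ι] [DecidableEq ι]
    (a : ι → ℝ) (C : Matrix ι ι ℝ) (x : ι → ℝ) : ℝ :=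
  (2 * Real.pi) ^ (-(Fintype.card ι : ℝ) / 2) * C.det ^ (-(1 : ℝ) / 2) *
    Real.exp (-(1 / 2) * ((x - a) ⬝ᵥ (C⁻¹ *ᵥ (x - a))))

/-- The multivariate Gaussian measure `N(a, C)`. -/
noncomputable def gaussMeasure {ι : Type*} [Fintype ι] [DecidableEq ι]
    (a : ι → ℝ) (C : Matrix ι ι ℝ) : Measure (ι → ℝ) :=
  volume.withDensity fun x => ENNReal.ofReal (gaussPdf a C x)

section BilinearForm

variable {E : Type*} [NormedAddCommGroup E] [NormedSpace ℝ E]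

theorem ContinuousLinearMap.hasFDerivAt_apply_self {F : Type*} [NormedAddCommGroup F]
    [NormedSpace ℝ F] (B : E →L[ℝ] E →L[ℝ] F) (hB : ∀ x y, B x y = B y x) (y₀ : E) :
    HasFDerivAt (fun y => B y y) ((2 : ℝ) • B y₀) y₀ := by
  refine (B.hasFDerivAt_of_bilinear (hasFDerivAt_id y₀) (hasFDerivAt_id y₀)).congr_fderiv ?_
  ext v
  simp [hB v y₀, two_smul]

theorem ContinuousLinearMap.exists_pos_mul_sq_norm_le_apply_self [FiniteDimensional ℝ E]
    (B : E →L[ℝ] E →L[ℝ] ℝ) (hB : ∀ y ≠ 0, 0 < B y y) :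
    ∃ c > 0, ∀ y, c * ‖y‖ ^ 2 ≤ B y y := by
  rcases subsingleton_or_nontrivial E with hE | hE
  · exact ⟨1, one_pos, fun y => by simp [Subsingleton.elim y 0]⟩
  obtain ⟨u, hu, hmin⟩ := (isCompact_sphere (0 : E) 1).exists_isMinOn
    (NormedSpace.sphere_nonempty.2 zero_le_one)
    (B.continuous₂.comp (continuous_id.prodMk continuous_id)).continuousOn
  refine ⟨B u u, hB u (ne_zero_of_mem_unit_sphere ⟨u, hu⟩), fun y => ?_⟩
  rcases eq_or_ne y 0 with rfl | hy
  · simp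
  have hy' : ‖y‖⁻¹ • y ∈ Metric.sphere (0 : E) 1 := by
    simp [norm_smul, inv_mul_cancel₀ (norm_ne_zero_iff.2 hy)]
  have hscale : B y y = ‖y‖ ^ 2 * B (‖y‖⁻¹ • y) (‖y‖⁻¹ • y) := by
    simp only [map_smul, _root_.smul_apply, smul_eq_mul]
    field_simp
  rw [hscale, mul_comm]
  exact mul_le_mul_of_nonneg_left (hmin hy') (sq_nonneg _)

end BilinearForm

namespace Matrix

variable {ι : Type*} [Fintype ι]

/-- Unlike `(toLinearMap₂' ℝ A).toContinuousBilinearMap`, this is definitionally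
`fun x y => x ⬝ᵥ A *ᵥ y`, so it can be matched against the exponent of `gaussPdf`. -/
noncomputable def toContinuousLinearMap₂' (A : Matrix ι ι ℝ) :
    (ι → ℝ) →L[ℝ] (ι → ℝ) →L[ℝ] ℝ :=
  ((dotProductBilin ℝ ℝ).compl₂ A.mulVecLin).toContinuousBilinearMap

@[simp]
theorem toContinuousLinearMap₂'_apply (A : Matrix ι ι ℝ) (x y : ι → ℝ) :
    A.toContinuousLinearMap₂' x y = x ⬝ᵥ A *ᵥ y :=
  rfl

theorem IsSymm.dotProduct_mulVec_comm {R : Type*} [CommSemiring R] {A : Matrix ι ι R}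
    (hA : A.IsSymm) (x y : ι → R) : x ⬝ᵥ A *ᵥ y = A *ᵥ x ⬝ᵥ y := by
  rw [dotProduct_mulVec, ← mulVec_transpose, hA.eq]

theorem integral_mulVec [DecidableEq ι] {α : Type*} [MeasurableSpace α] {μ : Measure α}
    {A : Matrix ι ι ℝ} (hA : IsUnit A) (g : α → ι → ℝ) :
    ∫ x, A *ᵥ g x ∂μ = A *ᵥ ∫ x, g x ∂μ :=
  letI := hA.invertible
  (A.toLinearEquiv' this).toContinuousLinearEquiv.integral_comp_comm g

end Matrix

theorem integrable_exp_neg_mul_sq_norm {ι : Type*} [Fintype ι] {b : ℝ} (hb : 0 < b) :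
    Integrable fun x : ι → ℝ => Real.exp (-b * ‖x‖ ^ 2) := by
  set n : ℝ := Fintype.card ι + 1
  have hn : 0 < n := by positivity
  have hprod : Integrable fun x : ι → ℝ => ∏ i, Real.exp (-(b / n) * x i ^ 2) :=
    Integrable.fintype_prod (f := fun _ t => Real.exp (-(b / n) * t ^ 2))
      fun _ => integrable_exp_neg_mul_sq (by positivity)
  refine hprod.mono' (by fun_prop) (.of_forall fun x => ?_)
  have hsum : ∑ i, x i ^ 2 ≤ n * ‖x‖ ^ 2 := calc
    ∑ i, x i ^ 2 ≤ ∑ _i : ι, ‖x‖ ^ 2 := Finset.sum_le_sum fun i _ => by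
      simpa [sq_abs] using pow_le_pow_left₀ (abs_nonneg _) (norm_le_pi_norm x i) 2
    _ ≤ n * ‖x‖ ^ 2 := by
      rw [Finset.sum_const, Finset.card_univ, nsmul_eq_mul]
      exact mul_le_mul_of_nonneg_right (by simp [n]) (sq_nonneg _)
  rw [Real.norm_of_nonneg (Real.exp_pos _).le, ← Real.exp_sum, ← Finset.mul_sum]
  refine Real.exp_le_exp.2 ?_
  rw [neg_mul, neg_mul, neg_le_neg_iff, div_mul_eq_mul_div, div_le_iff₀ hn]
  nlinarith

theorem mul_exp_neg_mul_sq_le {c r s : ℝ} (hc : 0 < c) (hs : 0 ≤ s) (hsr : s ≤ r + 1) :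
    r * Real.exp (-c * r ^ 2) ≤ Real.exp (1 / (2 * c) + c / 2) * Real.exp (-(c / 4) * s ^ 2) := by
  calc r * Real.exp (-c * r ^ 2) ≤ Real.exp r * Real.exp (-c * r ^ 2) := by
        gcongr; linarith [Real.add_one_le_exp r]
    _ ≤ Real.exp (1 / (2 * c) + c / 2) * Real.exp (-(c / 4) * s ^ 2) := by
        rw [← Real.exp_add, ← Real.exp_add]
        refine Real.exp_le_exp.2 ?_
        have hvertex : r - c / 2 * r ^ 2 ≤ 1 / (2 * c) := by
          rw [le_div_iff₀ (by positivity)]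
          nlinarith [sq_nonneg (c * r - 1)]
        nlinarith [mul_le_mul_of_nonneg_left (pow_le_pow_left₀ hs hsr 2) hc.le, sq_nonneg (r - 1)]

section Gaussian

variable {ι : Type*} [Fintype ι] [DecidableEq ι] {V : Matrix ι ι ℝ}

theorem gaussPdf_nonneg (hV : V.PosDef) (m x : ι → ℝ) : 0 ≤ gaussPdf m V x := by
  have := hV.det_pos
  unfold gaussPdf
  positivity

theorem continuous_gaussPdf (m : ι → ℝ) : Continuous (gaussPdf m V) := by
  unfold gaussPdf
  fun_prop

theorem hasFDerivAt_gaussPdf (hV : V.IsSymm) (x m₀ : ι → ℝ) :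
    HasFDerivAt (fun m => gaussPdf m V x)
      (gaussPdf m₀ V x • V⁻¹.toContinuousLinearMap₂' (x - m₀)) m₀ := by
  have hB : ∀ y z, V⁻¹.toContinuousLinearMap₂' y z = V⁻¹.toContinuousLinearMap₂' z y := by
    intro y z
    simp only [toContinuousLinearMap₂'_apply, hV.inv.dotProduct_mulVec_comm y, dotProduct_comm]
  have hQ := ((V⁻¹.toContinuousLinearMap₂'.hasFDerivAt_apply_self hB (x - m₀)).comp m₀
    ((hasFDerivAt_id m₀).const_sub x)).const_mul (-(1 / 2) : ℝ) |>.exp.const_mul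
    ((2 * Real.pi) ^ (-(Fintype.card ι : ℝ) / 2) * V.det ^ (-(1 : ℝ) / 2))
  refine (hQ.congr_fderiv ?_ : HasFDerivAt (fun m => gaussPdf m V x) _ m₀)
  ext v
  simp only [gaussPdf, Function.comp_apply, ContinuousLinearMap.comp_neg,
    ContinuousLinearMap.comp_id, _root_.neg_apply, _root_.smul_apply, smul_eq_mul,
    toContinuousLinearMap₂'_apply]
  ring

theorem exists_gaussPdf_le (hV : V.PosDef) :
    ∃ K ≥ 0, ∃ c > 0, ∀ m x, gaussPdf m V x ≤ K * Real.exp (-c * ‖x - m‖ ^ 2) := by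
  obtain ⟨c, hc, hcoer⟩ := V⁻¹.toContinuousLinearMap₂'.exists_pos_mul_sq_norm_le_apply_self
    fun y hy => by simpa using hV.inv.dotProduct_mulVec_pos hy
  have := hV.det_pos
  refine ⟨(2 * Real.pi) ^ (-(Fintype.card ι : ℝ) / 2) * V.det ^ (-(1 : ℝ) / 2), by positivity,
    c / 2, by positivity, fun m x => ?_⟩
  have hq := hcoer (x - m)
  rw [toContinuousLinearMap₂'_apply] at hq
  exact mul_le_mul_of_nonneg_left (Real.exp_le_exp.2 (by linarith)) (by positivity)

theorem integrable_gaussPdf (hV : V.PosDef) (m : ι → ℝ) : Integrable (gaussPdf m V) := by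
  obtain ⟨K, -, c, hc, hle⟩ := exists_gaussPdf_le hV
  refine (((integrable_exp_neg_mul_sq_norm hc).comp_sub_right m).const_mul K).mono'
    (continuous_gaussPdf m).aestronglyMeasurable (.of_forall fun x => ?_)
  rw [Real.norm_of_nonneg (gaussPdf_nonneg hV m x)]
  exact hle m x

theorem exists_integrable_gaussPdf_mul_norm_sub_le (hV : V.PosDef) (μ : ι → ℝ) :
    ∃ g : (ι → ℝ) → ℝ, Integrable g ∧
      ∀ m ∈ Metric.ball μ 1, ∀ x, gaussPdf m V x * ‖x - m‖ ≤ g x := by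
  obtain ⟨K, hK, c, hc, hle⟩ := exists_gaussPdf_le hV
  refine ⟨fun x => K * (Real.exp (1 / (2 * c) + c / 2) * Real.exp (-(c / 4) * ‖x - μ‖ ^ 2)),
    (((integrable_exp_neg_mul_sq_norm (by positivity)).comp_sub_right μ).const_mul _).const_mul K,
    fun m hm x => ?_⟩
  have hsr : ‖x - μ‖ ≤ ‖x - m‖ + 1 :=
    (norm_sub_le_norm_sub_add_norm_sub x m μ).trans (by simpa [dist_eq_norm] using hm.le)
  calc gaussPdf m V x * ‖x - m‖ ≤ K * Real.exp (-c * ‖x - m‖ ^ 2) * ‖x - m‖ := by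
        gcongr
        exact hle m x
    _ = K * (‖x - m‖ * Real.exp (-c * ‖x - m‖ ^ 2)) := by ring
    _ ≤ _ := mul_le_mul_of_nonneg_left (mul_exp_neg_mul_sq_le hc (norm_nonneg _) hsr) hK

theorem integral_gaussMeasure {G : Type*} [NormedAddCommGroup G] [NormedSpace ℝ G]
    (hV : V.PosDef) (m : ι → ℝ) (g : (ι → ℝ) → G) :
    ∫ x, g x ∂gaussMeasure m V = ∫ x, gaussPdf m V x • g x := by
  rw [gaussMeasure, integral_withDensity_eq_integral_toReal_smul
    (continuous_gaussPdf m).measurable.ennreal_ofReal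
    (.of_forall fun _ => ENNReal.ofReal_lt_top)]
  simp_rw [ENNReal.toReal_ofReal (gaussPdf_nonneg hV m _)]

theorem hasFDerivAt_integral_gaussMeasure {f : (ι → ℝ) → ℝ} (hf : Measurable f) {C : ℝ}
    (hfC : ∀ x, |f x| ≤ C) (hVsymm : V.IsSymm) (hV : V.PosDef) (μ : ι → ℝ) :
    HasFDerivAt (fun m => ∫ x, f x ∂gaussMeasure m V)
      (V⁻¹.toContinuousLinearMap₂' (∫ x, f x • (x - μ) ∂gaussMeasure μ V)) μ := by
  set B := V⁻¹.toContinuousLinearMap₂'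
  obtain ⟨g, hg, hgle⟩ := exists_integrable_gaussPdf_mul_norm_sub_le hV μ
  have hC : 0 ≤ C := (abs_nonneg _).trans (hfC 0)
  have hmoment : ∀ m ∈ Metric.ball μ 1, ∀ x, ‖(gaussPdf m V x * f x) • (x - m)‖ ≤ C * g x := by
    intro m hm x
    rw [norm_smul, norm_mul, Real.norm_of_nonneg (gaussPdf_nonneg hV m x), Real.norm_eq_abs]
    calc gaussPdf m V x * |f x| * ‖x - m‖ = |f x| * (gaussPdf m V x * ‖x - m‖) := by ring
      _ ≤ C * g x := mul_le_mul (hfC x) (hgle m hm x)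
        (mul_nonneg (gaussPdf_nonneg hV m x) (norm_nonneg _)) hC
  have hmeas : ∀ m, AEStronglyMeasurable (fun x => gaussPdf m V x * f x) :=
    fun m => ((continuous_gaussPdf m).measurable.mul hf).aestronglyMeasurable
  have hint : Integrable fun x => (gaussPdf μ V x * f x) • (x - μ) :=
    (hg.const_mul C).mono' ((hmeas μ).smul (by fun_prop))
      (.of_forall (hmoment μ (Metric.mem_ball_self one_pos)))
  have hderiv := hasFDerivAt_integral_of_dominated_of_fderiv_le
    (F' := fun m x => B ((gaussPdf m V x * f x) • (x - m))) (Metric.ball_mem_nhds μ one_pos)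
    (.of_forall hmeas)
    ((integrable_gaussPdf hV μ).mul_bdd hf.aestronglyMeasurable (.of_forall hfC))
    (B.continuous.comp_aestronglyMeasurable hint.aestronglyMeasurable)
    (.of_forall fun x m hm => (B.le_opNorm _).trans
      (mul_le_mul_of_nonneg_left (hmoment m hm x) (norm_nonneg B)))
    ((hg.const_mul C).const_mul ‖B‖)
    (.of_forall fun x m _ => by
      simpa [smul_smul, mul_comm] using (hasFDerivAt_gaussPdf hVsymm x m).const_mul (f x))
  simp_rw [integral_gaussMeasure hV, smul_smul, smul_eq_mul]
  rw [← B.integral_comp_comm hint]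
  exact hderiv

end Gaussian

/-- **Score-function gradient identity (Eq. (17) of the paper).**
For bounded measurable `f`, the map `μ ↦ E_{N(μ,V)}[f]` is differentiable and
its gradient is `∫ f(x) V⁻¹ (x − μ) dN(μ,V)(x)`, i.e. the derivative in any
direction `v` is the dot product of this integral with `v`. -/
theorem gaussian_mean_score_gradient
    {d : ℕ}
    (f : (Fin d → ℝ) → ℝ) (hf : Measurable f) (hfb : ∃ Cb : ℝ, ∀ x, |f x| ≤ Cb)
    (V : Matrix (Fin d) (Fin d) ℝ) (hVsymm : V.IsSymm) (hVpd : V.PosDef) :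
    Differentiable ℝ (fun m : Fin d → ℝ => ∫ x, f x ∂(gaussMeasure m V)) ∧
      ∀ (μ v : Fin d → ℝ),
        fderiv ℝ (fun m : Fin d → ℝ => ∫ x, f x ∂(gaussMeasure m V)) μ v =
          (∫ x, f x • (V⁻¹ *ᵥ (x - μ)) ∂(gaussMeasure μ V)) ⬝ᵥ v := by
  obtain ⟨C, hfC⟩ := hfb
  have hderiv μ := hasFDerivAt_integral_gaussMeasure hf hfC hVsymm hVpd μ
  refine ⟨fun μ => (hderiv μ).differentiableAt, fun μ v => ?_⟩
  simp_rw [(hderiv μ).fderiv, toContinuousLinearMap₂'_apply, ← mulVec_smul,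
    integral_mulVec (isUnit_nonsing_inv_iff.2 hVpd.isUnit)]
  exact hVsymm.inv.dotProduct_mulVec_comm _ v
end

section
/- Let p be a probability measure on ℝ^d with finite second moments, mean m ∈ ℝ^d, and symmetric positive definite covariance matrix S, and suppose p is absolutely continuous with respect to Lebesgue measure. Then for every μ ∈ ℝ^d and every symmetric positive definite d×d matrix Σ, the Kullback-Leibler divergence satisfies KL(p ‖ N(m, S)) ≤ KL(p ‖ N(μ, Σ)); that is, among all multivariate Gaussians q, the reverse KL divergence KL(p ‖ q) is minimized by matching the mean and covariance of q to those of p. -/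
open MeasureTheory Matrix
open scoped Classical

/-- Kullback-Leibler divergence `KL(p‖q) = ∫ log (dp/dq) dp`, equal to `⊤`
when `p` is not absolutely continuous w.r.t. `q` (or the log-likelihood
ratio is not integrable). -/
noncomputable def klDiv {α : Type*} [MeasurableSpace α] (p q : Measure α) : EReal :=
  if p ≪ q ∧ Integrable (llr p q) p then ((∫ x, llr p q x ∂p : ℝ) : EReal) else ⊤

/-!
The Gaussian log-density is a quadratic polynomial, so the cross entropy
`-∫ log N(μ, V) dp` depends on `p` only through its mean `m` and covariance `S`: it equals
`½ (n log 2π + log det V + tr (V⁻¹ S) + (m - μ)ᵀ V⁻¹ (m - μ))`. Since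
`KL(p ‖ N(μ, V)) = KL(p ‖ Lebesgue) - ∫ log N(μ, V) dp`, it suffices to minimise this cross
entropy. The mean term is minimised at `μ = m`, and with `B = S^{1/2} V⁻¹ S^{1/2}` the
remaining inequality `log det S + n ≤ log det V + tr (V⁻¹ S)` reads
`log det B ≤ tr B - n`, which is `log λ ≤ λ - 1` summed over the eigenvalues of `B`.
-/

namespace Matrix

variable {n : Type*} [Fintype n] [DecidableEq n]

theorem PosDef.log_det_le_trace_sub_card {B : Matrix n n ℝ} (hB : B.PosDef) :
    Real.log B.det ≤ B.trace - Fintype.card n := by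
  have hpos := hB.eigenvalues_pos
  rw [hB.isHermitian.det_eq_prod_eigenvalues, hB.isHermitian.trace_eq_sum_eigenvalues]
  simp only [RCLike.ofReal_real_eq_id, id]
  rw [Real.log_prod fun i _ => (hpos i).ne']
  calc ∑ i, Real.log (hB.isHermitian.eigenvalues i)
      ≤ ∑ i, (hB.isHermitian.eigenvalues i - 1) :=
        Finset.sum_le_sum fun i _ => Real.log_le_sub_one_of_pos (hpos i)
    _ = ∑ i, hB.isHermitian.eigenvalues i - Fintype.card n := by
        simp [Finset.sum_sub_distrib]

open scoped MatrixOrder in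
theorem PosDef.log_det_add_card_le {S V : Matrix n n ℝ} (hS : S.PosDef) (hV : V.PosDef) :
    Real.log S.det + Fintype.card n ≤ Real.log V.det + (V⁻¹ * S).trace := by
  set R := CFC.sqrt S
  have hR : R.IsHermitian := (CFC.sqrt_nonneg S).posSemidef.isHermitian
  have hRR : R * R = S := CFC.sqrt_mul_sqrt_self S hS.posSemidef.nonneg
  have hdet : (R * V⁻¹ * R).det = S.det * V.det⁻¹ := by
    rw [← hRR, det_mul, det_mul, det_mul, det_nonsing_inv, Ring.inverse_eq_inv]
    ring
  have hB : (R * V⁻¹ * R).PosDef := by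
    have hpsd := hV.inv.posSemidef.mul_mul_conjTranspose_same R
    rw [hR.eq] at hpsd
    exact hpsd.posDef_iff_det_ne_zero.mpr
      (hdet ▸ (mul_pos hS.det_pos (inv_pos.mpr hV.det_pos)).ne')
  have htrace : (R * V⁻¹ * R).trace = (V⁻¹ * S).trace := by
    rw [trace_mul_cycle, hRR, trace_mul_comm]
  have key := hB.log_det_le_trace_sub_card
  rw [hdet, htrace, Real.log_mul hS.det_pos.ne' (inv_pos.mpr hV.det_pos).ne',
    Real.log_inv] at key
  linarith

end Matrix

section KL

variable {α : Type*} [MeasurableSpace α] {p μ : Measure α} [SigmaFinite p] [SigmaFinite μ]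
  {f : α → ℝ}

theorem llr_withDensity_ofReal_ae_eq (hac : p ≪ μ) (hf : Measurable f)
    (hf_pos : ∀ x, 0 < f x) :
    llr p (μ.withDensity fun x => ENNReal.ofReal (f x)) =ᵐ[p]
      fun x => llr p μ x - Real.log (f x) := by
  have h := Measure.rnDeriv_withDensity_right p μ hf.ennreal_ofReal.aemeasurable
    (ae_of_all _ fun x => by simp [hf_pos x]) (ae_of_all _ fun _ => ENNReal.ofReal_ne_top)
  filter_upwards [hac.ae_le h, Measure.rnDeriv_pos hac,
    hac.ae_le (Measure.rnDeriv_lt_top p μ)] with x hx hpos hlt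
  rw [llr, llr, hx, ENNReal.toReal_mul, ENNReal.toReal_inv,
    ENNReal.toReal_ofReal (hf_pos x).le, Real.log_mul (inv_ne_zero (hf_pos x).ne')
      (ENNReal.toReal_pos hpos.ne' hlt.ne).ne', Real.log_inv]
  ring

theorem klDiv_withDensity_ofReal (hac : p ≪ μ) (hf : Measurable f) (hf_pos : ∀ x, 0 < f x)
    (hlog : Integrable (fun x => Real.log (f x)) p) :
    klDiv p (μ.withDensity fun x => ENNReal.ofReal (f x)) =
      klDiv p μ - ((∫ x, Real.log (f x) ∂p : ℝ) : EReal) := by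
  have hac' : p ≪ μ.withDensity fun x => ENNReal.ofReal (f x) :=
    hac.trans <| withDensity_absolutelyContinuous' hf.ennreal_ofReal.aemeasurable
      (ae_of_all _ fun x => by simp [hf_pos x])
  have hllr := llr_withDensity_ofReal_ae_eq hac hf hf_pos
  have hint : Integrable (llr p (μ.withDensity fun x => ENNReal.ofReal (f x))) p ↔
      Integrable (llr p μ) p := by
    rw [integrable_congr hllr]
    refine ⟨fun h => (h.add hlog).congr (ae_of_all _ fun x => ?_), fun h => h.sub hlog⟩
    simp
  by_cases h : Integrable (llr p μ) p
  · rw [klDiv, klDiv, if_pos ⟨hac', hint.mpr h⟩, if_pos ⟨hac, h⟩, integral_congr_ae hllr,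
      integral_sub h hlog, EReal.coe_sub]
  · rw [klDiv, klDiv, if_neg fun h' => h (hint.mp h'.2), if_neg fun h' => h h'.2,
      EReal.top_sub_coe]

end KL

section Gaussian

variable {ι : Type*} [Fintype ι] [DecidableEq ι]

theorem gaussPdf_pos (a : ι → ℝ) {C : Matrix ι ι ℝ} (hC : C.PosDef) (x : ι → ℝ) :
    0 < gaussPdf a C x := by
  have := hC.det_pos
  unfold gaussPdf
  positivity

theorem measurable_gaussPdf (a : ι → ℝ) (C : Matrix ι ι ℝ) :
    Measurable (gaussPdf a C) := by
  unfold gaussPdf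
  fun_prop

theorem log_gaussPdf (a : ι → ℝ) {C : Matrix ι ι ℝ} (hC : C.PosDef) (x : ι → ℝ) :
    Real.log (gaussPdf a C x) =
      -(Fintype.card ι / 2 * Real.log (2 * Real.pi)) - Real.log C.det / 2 -
        (x - a) ⬝ᵥ (C⁻¹ *ᵥ (x - a)) / 2 := by
  have := hC.det_pos
  unfold gaussPdf
  rw [Real.log_mul (by positivity) (Real.exp_ne_zero _), Real.log_mul (by positivity)
    (by positivity), Real.log_exp, Real.log_rpow (by positivity), Real.log_rpow hC.det_pos]
  ring

end Gaussian

section SecondMoments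

theorem Matrix.dotProduct_mulVec_self_eq_sum {ι : Type*} [Fintype ι] (A : Matrix ι ι ℝ)
    (x : ι → ℝ) :
    x ⬝ᵥ (A *ᵥ x) = ∑ i, ∑ j, A i j * (x i * x j) := by
  simp only [dotProduct, mulVec, Finset.mul_sum]
  exact Finset.sum_congr rfl fun i _ => Finset.sum_congr rfl fun j _ => by ring

variable {ι : Type*} {p : Measure (ι → ℝ)}
  (hmom2 : ∀ i j, Integrable (fun x => x i * x j) p)
  {m : ι → ℝ} (hm : ∀ i, ∫ x, x i ∂p = m i)
  {S : Matrix ι ι ℝ} (hS : ∀ i j, ∫ x, (x i - m i) * (x j - m j) ∂p = S i j)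
include hmom2

theorem integrable_apply_of_integrable_mul_self [IsFiniteMeasure p] (i : ι) :
    Integrable (fun x => x i) p := by
  refine ((memLp_two_iff_integrable_sq (measurable_pi_apply i).aestronglyMeasurable).mpr
    ?_).integrable one_le_two
  simpa only [sq] using hmom2 i i

theorem integrable_sub_mul_sub [IsFiniteMeasure p] (a : ι → ℝ) (i j : ι) :
    Integrable (fun x => (x i - a i) * (x j - a j)) p := by
  have hi := integrable_apply_of_integrable_mul_self hmom2 i
  have hj := integrable_apply_of_integrable_mul_self hmom2 j
  refine ((((hmom2 i j).sub (hi.mul_const (a j))).sub (hj.const_mul (a i))).add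
    (integrable_const (a i * a j))).congr (ae_of_all _ fun x => ?_)
  simp only [Pi.add_apply, Pi.sub_apply]
  ring

include hm hS in
theorem integral_sub_mul_sub [IsProbabilityMeasure p] (a : ι → ℝ) (i j : ι) :
    ∫ x, (x i - a i) * (x j - a j) ∂p = S i j + (m i - a i) * (m j - a j) := by
  have hcentred k : Integrable (fun x => x k - m k) p :=
    (integrable_apply_of_integrable_mul_self hmom2 k).sub (integrable_const _)
  have hmean k : ∫ x, (x k - m k) ∂p = 0 := by
    rw [integral_sub (integrable_apply_of_integrable_mul_self hmom2 k) (integrable_const _),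
      hm k, integral_const]
    simp
  have hsplit : ∀ x : ι → ℝ, (x i - a i) * (x j - a j) = (x i - m i) * (x j - m j) +
      (m i - a i) * (x j - m j) + (m j - a j) * (x i - m i) + (m i - a i) * (m j - a j) :=
    fun x => by ring
  rw [integral_congr_ae (ae_of_all p hsplit), integral_add _ (integrable_const _),
    integral_add _ ((hcentred i).const_mul _), integral_add (integrable_sub_mul_sub hmom2 m i j)
      ((hcentred j).const_mul _), integral_const_mul, integral_const_mul, hmean, hmean, hS,
    integral_const]
  · simp
  · exact (integrable_sub_mul_sub hmom2 m i j).add ((hcentred j).const_mul _)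
  · exact ((integrable_sub_mul_sub hmom2 m i j).add ((hcentred j).const_mul _)).add
      ((hcentred i).const_mul _)

variable [Fintype ι]

theorem integrable_quadForm [IsFiniteMeasure p] (A : Matrix ι ι ℝ) (a : ι → ℝ) :
    Integrable (fun x => (x - a) ⬝ᵥ (A *ᵥ (x - a))) p := by
  simp only [Matrix.dotProduct_mulVec_self_eq_sum, Pi.sub_apply]
  exact integrable_finsetSum _ fun i _ => integrable_finsetSum _ fun j _ =>
    (integrable_sub_mul_sub hmom2 a i j).const_mul (A i j)

include hm hS in
theorem integral_quadForm [IsProbabilityMeasure p] (A : Matrix ι ι ℝ) (a : ι → ℝ) :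
    ∫ x, (x - a) ⬝ᵥ (A *ᵥ (x - a)) ∂p =
      (A * S).trace + (m - a) ⬝ᵥ (A *ᵥ (m - a)) := by
  have hSsymm i j : S j i = S i j := by simp only [← hS, mul_comm]
  simp only [Matrix.dotProduct_mulVec_self_eq_sum, Pi.sub_apply]
  rw [integral_finsetSum _ fun i _ => integrable_finsetSum _ fun j _ =>
    (integrable_sub_mul_sub hmom2 a i j).const_mul (A i j)]
  simp_rw [integral_finsetSum _ fun j _ => (integrable_sub_mul_sub hmom2 a _ j).const_mul _,
    integral_const_mul, integral_sub_mul_sub hmom2 hm hS, mul_add, Finset.sum_add_distrib,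
    Matrix.trace, Matrix.diag_apply, Matrix.mul_apply, hSsymm]

variable [DecidableEq ι]

theorem integrable_log_gaussPdf [IsFiniteMeasure p] (a : ι → ℝ) {C : Matrix ι ι ℝ}
    (hC : C.PosDef) :
    Integrable (fun x => Real.log (gaussPdf a C x)) p := by
  simp only [log_gaussPdf a hC]
  exact ((integrable_const _).sub (integrable_const _)).sub
    ((integrable_quadForm hmom2 C⁻¹ a).div_const 2)

include hm hS in
theorem integral_log_gaussPdf [IsProbabilityMeasure p] (a : ι → ℝ) {C : Matrix ι ι ℝ}
    (hC : C.PosDef) :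
    ∫ x, Real.log (gaussPdf a C x) ∂p =
      -(Fintype.card ι / 2 * Real.log (2 * Real.pi)) - Real.log C.det / 2 -
        ((C⁻¹ * S).trace + (m - a) ⬝ᵥ (C⁻¹ *ᵥ (m - a))) / 2 := by
  simp only [log_gaussPdf a hC]
  rw [integral_sub (integrable_const _) ((integrable_quadForm hmom2 C⁻¹ a).div_const 2),
    integral_div, integral_quadForm hmom2 hm hS, integral_const]
  simp

include hm hS in
theorem integral_log_gaussPdf_le [IsProbabilityMeasure p] (μ : ι → ℝ) {V : Matrix ι ι ℝ}
    (hSpd : S.PosDef) (hVpd : V.PosDef) :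
    ∫ x, Real.log (gaussPdf μ V x) ∂p ≤ ∫ x, Real.log (gaussPdf m S x) ∂p := by
  have hdet := hSpd.log_det_add_card_le hVpd
  have hmean : 0 ≤ (m - μ) ⬝ᵥ (V⁻¹ *ᵥ (m - μ)) := by
    simpa using hVpd.inv.posSemidef.dotProduct_mulVec_nonneg (m - μ)
  rw [integral_log_gaussPdf hmom2 hm hS μ hVpd, integral_log_gaussPdf hmom2 hm hS m hSpd,
    Matrix.nonsing_inv_mul S ((Matrix.isUnit_iff_isUnit_det S).mp hSpd.isUnit),
    Matrix.trace_one, sub_self, Matrix.mulVec_zero, dotProduct_zero, add_zero]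
  linarith

end SecondMoments

theorem reverse_KL_minimized_by_moment_matching_general
    {d : ℕ}
    (p : Measure (Fin d → ℝ)) [IsProbabilityMeasure p]
    (hac : p ≪ (volume : Measure (Fin d → ℝ)))
    (hmom2 : ∀ i j : Fin d, Integrable (fun x => x i * x j) p)
    (m : Fin d → ℝ) (hm : ∀ i, ∫ x, x i ∂p = m i)
    (S : Matrix (Fin d) (Fin d) ℝ) (hSpd : S.PosDef)
    (hS : ∀ i j, ∫ x, (x i - m i) * (x j - m j) ∂p = S i j) :
    ∀ (μ : Fin d → ℝ) (V : Matrix (Fin d) (Fin d) ℝ),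
      V.IsSymm → V.PosDef →
        klDiv p (gaussMeasure m S) ≤ klDiv p (gaussMeasure μ V) := by
  intro μ V _ hVpd
  rw [gaussMeasure, gaussMeasure,
    klDiv_withDensity_ofReal hac (measurable_gaussPdf m S) (gaussPdf_pos m hSpd)
      (integrable_log_gaussPdf hmom2 m hSpd),
    klDiv_withDensity_ofReal hac (measurable_gaussPdf μ V) (gaussPdf_pos μ hVpd)
      (integrable_log_gaussPdf hmom2 μ hVpd)]
  exact EReal.sub_le_sub le_rfl
    (EReal.coe_le_coe_iff.mpr (integral_log_gaussPdf_le hmom2 hm hS μ hSpd hVpd))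

/-- **Moment matching minimizes the reverse KL divergence (Eq. (25)).**
Among all multivariate Gaussians `N(μ, Σ)`, `KL(p ‖ N(μ, Σ))` is minimized by
matching the mean `m` and covariance `S` of `p`. -/
theorem reverse_KL_minimized_by_moment_matching
    {d : ℕ}
    (p : Measure (Fin d → ℝ)) [IsProbabilityMeasure p]
    (hac : p ≪ (volume : Measure (Fin d → ℝ)))
    (hmom2 : ∀ i j : Fin d, Integrable (fun x => x i * x j) p)
    (m : Fin d → ℝ) (hm : ∀ i, ∫ x, x i ∂p = m i)
    (S : Matrix (Fin d) (Fin d) ℝ) (hSsymm : S.IsSymm) (hSpd : S.PosDef)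
    (hS : ∀ i j, ∫ x, (x i - m i) * (x j - m j) ∂p = S i j) :
    ∀ (μ : Fin d → ℝ) (V : Matrix (Fin d) (Fin d) ℝ),
      V.IsSymm → V.PosDef →
        klDiv p (gaussMeasure m S) ≤ klDiv p (gaussMeasure μ V) :=
  reverse_KL_minimized_by_moment_matching_general p hac hmom2 m hm S hSpd hS
end

section
/- Let μ be a σ-finite measure on a measurable space X and let p, q : X → (0, ∞) be measurable probability densities with respect to μ that are positive μ-a.e. Suppose there exists ε > 0 such that ∫ p^{1+ε} q^{−ε} dμ < ∞ and ∫ p (log(p/q))² dμ < ∞. Then the α-divergence D_α[p‖q] = (1/(α(1−α)))(1 − ∫ p^α q^{1−α} dμ) satisfies lim_{α → 1⁻} D_α[p‖q] = KL[p‖q] = ∫ p log(p/q) dμ. -/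
/-!
Write `L = log (p / q)` and `t = 1 - α`. Then `p ^ α * q ^ (1 - α) = p * exp (-(t * L))`, and
since `∫ p = 1` the α-divergence equals `α⁻¹ * ∫ p * (1 - exp (-(t * L))) / t`, whose integrand
tends to `p * L` as `t → 0⁺`. For `t ≤ 1 / 2`, convexity of `exp` bounds the integrand by
`|p * L| + 2 * p * exp (-L / 2) = |p * L| + 2 * √(p * q) ≤ |p * L| + p + q`, and `p * L` is
integrable because `|L| ≤ (1 + L ^ 2) / 2`; dominated convergence concludes.
-/

open MeasureTheory Filter Topology Real

namespace Real

theorem rpow_mul_rpow_one_sub_eq_mul_exp {a b : ℝ} (ha : 0 < a) (hb : 0 < b) (α : ℝ) :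
    a ^ α * b ^ (1 - α) = a * exp (-((1 - α) * log (a / b))) :=
  calc a ^ α * b ^ (1 - α) = exp (log a + -((1 - α) * (log a - log b))) := by
        rw [rpow_def_of_pos ha, rpow_def_of_pos hb, ← exp_add]; ring_nf
    _ = a * exp (-((1 - α) * log (a / b))) := by
        rw [exp_add, exp_log ha, log_div ha.ne' hb.ne']

theorem abs_one_sub_exp_neg_mul_div_le {t : ℝ} (ht₀ : 0 < t) (ht : t ≤ 1 / 2) (y : ℝ) :
    |(1 - exp (-(t * y))) / t| ≤ |y| + 2 * exp (-(y / 2)) := by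
  rw [abs_div, abs_of_pos ht₀, div_le_iff₀ ht₀]
  have hexp : 0 ≤ exp (-(y / 2)) := (exp_pos _).le
  rcases le_or_gt 0 y with hy | hy
  · have hle : exp (-(t * y)) ≤ 1 := exp_le_one_iff.2 (by nlinarith)
    have hge : 1 - t * y ≤ exp (-(t * y)) := by linarith [add_one_le_exp (-(t * y))]
    rw [abs_of_nonneg (by linarith), abs_of_nonneg hy]
    nlinarith
  · have hcvx := convexOn_exp.2 (Set.mem_univ 0) (Set.mem_univ (-(y / 2)))
      (by linarith : 0 ≤ 1 - 2 * t) (by linarith : 0 ≤ 2 * t) (by ring)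
    simp only [smul_eq_mul, mul_zero, zero_add, exp_zero, mul_one] at hcvx
    rw [show 2 * t * -(y / 2) = -(t * y) by ring] at hcvx
    have hge : 1 ≤ exp (-(t * y)) := one_le_exp_iff.2 (by nlinarith)
    rw [abs_of_nonpos (by linarith), abs_of_neg hy]
    nlinarith

theorem tendsto_one_sub_exp_neg_mul_div (y : ℝ) :
    Tendsto (fun t => (1 - exp (-(t * y))) / t) (𝓝[≠] 0) (𝓝 y) := by
  have hderiv : HasDerivAt (fun t => exp (-(t * y))) (-y) 0 := by
    simpa using ((hasDerivAt_id (0 : ℝ)).mul_const y).neg.exp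
  refine ((hasDerivAt_iff_tendsto_slope.1 hderiv).neg.congr fun t => ?_).trans (by rw [neg_neg])
  simp only [slope_def_field, zero_mul, neg_zero, exp_zero, sub_zero]
  ring

end Real

theorem tendsto_one_sub_nhdsLT_one : Tendsto (fun α : ℝ => 1 - α) (𝓝[<] 1) (𝓝[>] 0) := by
  refine tendsto_nhdsWithin_of_tendsto_nhds_of_eventually_within _ ?_ ?_
  · exact ((continuous_const.sub continuous_id).tendsto' 1 0 (sub_self 1)).mono_left
      nhdsWithin_le_nhds
  · filter_upwards [self_mem_nhdsWithin] with α hα using sub_pos.2 (Set.mem_Iio.1 hα)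

namespace MeasureTheory

variable {X : Type*} [MeasurableSpace X] {μ : Measure X}

theorem Integrable.mul_of_integrable_mul_sq {p f : X → ℝ} (hp : Integrable p μ)
    (hpf : Integrable (fun x => p x * f x ^ 2) μ) (hf : AEStronglyMeasurable f μ) :
    Integrable (fun x => p x * f x) μ := by
  refine ((hp.norm.add hpf.norm).div_const 2).mono' (hp.1.mul hf) (ae_of_all _ fun x => ?_)
  simp only [Pi.add_apply, norm_mul, norm_pow, Real.norm_eq_abs]
  nlinarith [abs_nonneg (p x), mul_nonneg (abs_nonneg (p x)) (sq_nonneg (|f x| - 1)), sq_abs (f x)]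

theorem Integrable.rpow_mul_rpow_one_sub {p q : X → ℝ} (hp : Integrable p μ)
    (hq : Integrable q μ) (hp₀ : 0 ≤ᵐ[μ] p) (hq₀ : 0 ≤ᵐ[μ] q) {α : ℝ} (hα₀ : 0 ≤ α)
    (hα₁ : α ≤ 1) : Integrable (fun x => p x ^ α * q x ^ (1 - α)) μ := by
  refine ((hp.const_mul α).add (hq.const_mul (1 - α))).mono'
    ((hp.aemeasurable.pow_const α).mul (hq.aemeasurable.pow_const _)).aestronglyMeasurable ?_
  filter_upwards [hp₀, hq₀] with x hpx hqx
  rw [Real.norm_eq_abs, abs_of_nonneg (mul_nonneg (rpow_nonneg hpx _) (rpow_nonneg hqx _))]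
  exact geom_mean_le_arith_mean2_weighted hα₀ (sub_nonneg.2 hα₁) hpx hqx (by ring)

theorem tendsto_integral_mul_one_sub_exp_neg_mul_div {p L : X → ℝ}
    (hp : AEStronglyMeasurable p μ) (hL : AEStronglyMeasurable L μ)
    (hpL : Integrable (fun x => p x * L x) μ)
    (hpexp : Integrable (fun x => p x * exp (-(L x / 2))) μ) :
    Tendsto (fun t => ∫ x, p x * ((1 - exp (-(t * L x))) / t) ∂μ) (𝓝[>] 0)
      (𝓝 (∫ x, p x * L x ∂μ)) := by
  refine tendsto_integral_filter_of_dominated_convergence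
    (fun x => ‖p x * L x‖ + 2 * ‖p x * exp (-(L x / 2))‖) ?_ ?_
    (hpL.norm.add (hpexp.norm.const_mul 2)) ?_
  · exact Eventually.of_forall fun t => hp.mul <|
      (by fun_prop : Continuous fun y => (1 - exp (-(t * y))) / t).comp_aestronglyMeasurable hL
  · filter_upwards [Ioo_mem_nhdsGT (by norm_num : (0 : ℝ) < 1 / 2)] with t ht
    refine Eventually.of_forall fun x => ?_
    have hbound := mul_le_mul_of_nonneg_left
      (abs_one_sub_exp_neg_mul_div_le ht.1 ht.2.le (L x)) (abs_nonneg (p x))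
    simp only [norm_mul, Real.norm_eq_abs, abs_exp] at hbound ⊢
    linarith
  · exact Eventually.of_forall fun x =>
      ((tendsto_one_sub_exp_neg_mul_div (L x)).mono_left (nhdsGT_le_nhdsNE 0)).const_mul (p x)

end MeasureTheory

theorem alpha_divergence_tendsto_forward_KL_general
    {X : Type*} [MeasurableSpace X] (μ : Measure X)
    (p q : X → ℝ)
    (hp0 : ∀ᵐ x ∂μ, 0 < p x) (hq0 : ∀ᵐ x ∂μ, 0 < q x)
    (hpInt : Integrable p μ) (hqInt : Integrable q μ)
    (hp1 : ∫ x, p x ∂μ = 1)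
    (hlog2 : Integrable (fun x => p x * (Real.log (p x / q x)) ^ 2) μ) :
    Tendsto
      (fun α : ℝ => (1 / (α * (1 - α))) * (1 - ∫ x, p x ^ α * q x ^ (1 - α) ∂μ))
      (nhdsWithin 1 (Set.Iio 1))
      (nhds (∫ x, p x * Real.log (p x / q x) ∂μ)) := by
  set L := fun x => log (p x / q x)
  have hL : AEStronglyMeasurable L μ := (measurable_log.comp_aemeasurable
    (hpInt.aemeasurable.div hqInt.aemeasurable)).aestronglyMeasurable
  have hgeom_eq (α : ℝ) :
      (fun x => p x ^ α * q x ^ (1 - α)) =ᵐ[μ] fun x => p x * exp (-((1 - α) * L x)) := by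
    filter_upwards [hp0, hq0] with x hpx hqx using rpow_mul_rpow_one_sub_eq_mul_exp hpx hqx α
  have hgeom_int {α : ℝ} (hα : α ∈ Set.Icc (0 : ℝ) 1) :
      Integrable (fun x => p x * exp (-((1 - α) * L x))) μ :=
    (hpInt.rpow_mul_rpow_one_sub hqInt (hp0.mono fun _ h => h.le) (hq0.mono fun _ h => h.le)
      hα.1 hα.2).congr (hgeom_eq α)
  have hsqrt : Integrable (fun x => p x * exp (-(L x / 2))) μ := by
    convert hgeom_int (α := 1 / 2) ⟨by norm_num, by norm_num⟩ using 4; ring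
  have hquot := (tendsto_integral_mul_one_sub_exp_neg_mul_div hpInt.1 hL
    (hpInt.mul_of_integrable_mul_sq hlog2 hL) hsqrt).comp tendsto_one_sub_nhdsLT_one
  have hinv : Tendsto (fun α : ℝ => 1 / α) (𝓝[<] 1) (𝓝 1) := by
    simpa using (tendsto_id.mono_left nhdsWithin_le_nhds).inv₀ (one_ne_zero' ℝ)
  refine (one_mul (∫ x, p x * L x ∂μ) ▸ hinv.mul hquot).congr' ?_
  filter_upwards [Ioo_mem_nhdsLT (zero_lt_one' ℝ)] with α hα
  have h1α : 1 - α ≠ 0 := sub_ne_zero.2 hα.2.ne'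
  simp only [Function.comp_apply, ← mul_div_assoc, mul_sub, mul_one]
  rw [integral_congr_ae (hgeom_eq α), integral_div,
    integral_sub hpInt (hgeom_int ⟨hα.1.le, hα.2.le⟩), hp1]
  field_simp

/-- **α → 1 limit of the α-divergence is the forward KL divergence
(Eq. (27) of the paper).**
`D_α[p‖q] = (1/(α(1−α)))(1 − ∫ p^α q^{1−α} dμ) → ∫ p log(p/q) dμ` as `α → 1⁻`. -/
theorem alpha_divergence_tendsto_forward_KL
    {X : Type*} [MeasurableSpace X] (μ : Measure X) [SigmaFinite μ]
    (p q : X → ℝ) (hpm : Measurable p) (hqm : Measurable q)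
    (hp0 : ∀ᵐ x ∂μ, 0 < p x) (hq0 : ∀ᵐ x ∂μ, 0 < q x)
    (hpInt : Integrable p μ) (hqInt : Integrable q μ)
    (hp1 : ∫ x, p x ∂μ = 1) (hq1 : ∫ x, q x ∂μ = 1)
    (ε : ℝ) (hε : 0 < ε)
    (hmoment : Integrable (fun x => p x ^ (1 + ε) * q x ^ (-ε)) μ)
    (hlog2 : Integrable (fun x => p x * (Real.log (p x / q x)) ^ 2) μ) :
    Tendsto
      (fun α : ℝ => (1 / (α * (1 - α))) * (1 - ∫ x, p x ^ α * q x ^ (1 - α) ∂μ))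
      (nhdsWithin 1 (Set.Iio 1))
      (nhds (∫ x, p x * Real.log (p x / q x) ∂μ)) :=
  alpha_divergence_tendsto_forward_KL_general μ p q hp0 hq0 hpInt hqInt hp1 hlog2
end

section
/- Let μ be a σ-finite measure on a measurable space X and let p, q : X → (0, ∞) be measurable probability densities with respect to μ that are positive μ-a.e. Suppose there exists ε > 0 such that ∫ q^{1+ε} p^{−ε} dμ < ∞ and ∫ q (log(q/p))² dμ < ∞. Then the α-divergence D_α[p‖q] = (1/(α(1−α)))(1 − ∫ p^α q^{1−α} dμ) satisfies lim_{α → 0⁺} D_α[p‖q] = KL[q‖p] = ∫ q log(q/p) dμ. -/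
open MeasureTheory Filter Set Topology

/-!
Writing `L = log (p / q)`, we have `p ^ α * q ^ (1 - α) = q * exp (α * L)`, so with
`F α = ∫ q * exp (α * L) dμ` we get `F 0 = 1` and `D_α[p‖q] = -(1 - α)⁻¹ * (F α - F 0) / α`.
Hence it suffices that `F` has right derivative `∫ q * L dμ = -KL[q‖p]` at `0`. This is dominated
convergence: for `0 < α ≤ 1`, `|exp (α t) - 1| / α ≤ |t| + exp t`, and both `q * exp L = p` and
`|q * L| ≤ (q + q * L ^ 2) / 2` are integrable.
-/

namespace Real

lemma rpow_mul_rpow_one_sub {a b : ℝ} (ha : 0 < a) (hb : 0 < b) (α : ℝ) :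
    a ^ α * b ^ (1 - α) = b * exp (α * log (a / b)) := by
  rw [log_div ha.ne' hb.ne', rpow_def_of_pos ha, rpow_def_of_pos hb, mul_comm b,
    ← exp_log hb, log_exp, ← exp_add, ← exp_add]
  ring_nf

lemma exp_mul_le_one_add_exp {α : ℝ} (hα₀ : 0 ≤ α) (hα₁ : α ≤ 1) (t : ℝ) :
    exp (α * t) ≤ 1 + exp t := by
  rcases le_total t 0 with ht | ht
  · have : exp (α * t) ≤ 1 := exp_le_one_iff.2 (mul_nonpos_of_nonneg_of_nonpos hα₀ ht)
    linarith [exp_pos t]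
  · have : exp (α * t) ≤ exp t := exp_le_exp.2 (mul_le_of_le_one_left ht hα₁)
    linarith

lemma abs_exp_mul_sub_one_le {α : ℝ} (hα₀ : 0 ≤ α) (hα₁ : α ≤ 1) (t : ℝ) :
    |exp (α * t) - 1| ≤ α * (|t| + exp t) := by
  rcases le_total t 0 with ht | ht
  · have hle : exp (α * t) ≤ 1 := exp_le_one_iff.2 (mul_nonpos_of_nonneg_of_nonpos hα₀ ht)
    rw [abs_of_nonpos (sub_nonpos.2 hle), abs_of_nonpos ht]
    nlinarith [add_one_le_exp (α * t), exp_pos t]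
  · -- Bernoulli's inequality `(1 + s) ^ α ≤ 1 + α s` at `1 + s = exp t`.
    have hconv : exp (α * t) ≤ 1 + α * (exp t - 1) := by
      simpa [mul_comm α t, exp_mul] using
        rpow_one_add_le_one_add_mul_self (s := exp t - 1) (by linarith [exp_pos t]) hα₀ hα₁
    rw [abs_of_nonneg (sub_nonneg.2 (one_le_exp (mul_nonneg hα₀ ht))), abs_of_nonneg ht]
    nlinarith

end Real

section

variable {X : Type*} [MeasurableSpace X] {μ : Measure X} {q L : X → ℝ}

lemma integrable_mul_of_integrable_mul_sq (hL : AEStronglyMeasurable L μ) (hq : Integrable q μ)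
    (hqL2 : Integrable (fun x => q x * L x ^ 2) μ) : Integrable (fun x => q x * L x) μ := by
  refine ((hq.norm.add hqL2.norm).div_const 2).mono' (hq.1.mul hL) (ae_of_all _ fun x => ?_)
  simp only [Pi.add_apply, norm_mul, norm_pow, Real.norm_eq_abs]
  nlinarith [abs_nonneg (q x), sq_nonneg (|L x| - 1), sq_abs (L x)]

lemma integrable_mul_exp_mul (hL : AEStronglyMeasurable L μ) (hq : Integrable q μ)
    (hqexp : Integrable (fun x => q x * Real.exp (L x)) μ) {α : ℝ} (hα₀ : 0 ≤ α) (hα₁ : α ≤ 1) :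
    Integrable (fun x => q x * Real.exp (α * L x)) μ := by
  refine (hq.norm.add hqexp.norm).mono'
    (hq.1.mul (Real.continuous_exp.comp_aestronglyMeasurable (hL.const_mul α)))
    (ae_of_all _ fun x => ?_)
  simp only [Pi.add_apply, norm_mul, Real.norm_eq_abs, abs_of_pos (Real.exp_pos _)]
  nlinarith [abs_nonneg (q x), Real.exp_mul_le_one_add_exp hα₀ hα₁ (L x)]

theorem hasDerivWithinAt_integral_mul_exp_mul (hL : AEStronglyMeasurable L μ)
    (hq : Integrable q μ) (hqexp : Integrable (fun x => q x * Real.exp (L x)) μ)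
    (hqL : Integrable (fun x => q x * L x) μ) :
    HasDerivWithinAt (fun α => ∫ x, q x * Real.exp (α * L x) ∂μ) (∫ x, q x * L x ∂μ) (Ioi 0) 0 := by
  rw [hasDerivWithinAt_iff_tendsto_slope' self_notMem_Ioi]
  have hslope : ∀ᶠ α in 𝓝[>] (0 : ℝ), ∫ x, q x * slope (fun a => Real.exp (a * L x)) 0 α ∂μ =
      slope (fun α => ∫ x, q x * Real.exp (α * L x) ∂μ) 0 α := by
    filter_upwards [Ioo_mem_nhdsGT one_pos] with α hα
    simp only [slope_def_field, sub_zero, zero_mul, Real.exp_zero, mul_one, mul_div_assoc',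
      mul_sub, integral_div]
    rw [integral_sub (integrable_mul_exp_mul hL hq hqexp hα.1.le hα.2.le) hq]
  refine Tendsto.congr' hslope (tendsto_integral_filter_of_dominated_convergence
    (fun x => ‖q x * L x‖ + ‖q x * Real.exp (L x)‖) ?_ ?_ (hqL.norm.add hqexp.norm) ?_)
  · refine Eventually.of_forall fun α => hq.1.mul ?_
    simp only [slope_def_field]
    fun_prop
  · filter_upwards [Ioo_mem_nhdsGT one_pos] with α hα
    refine ae_of_all _ fun x => ?_
    have := Real.abs_exp_mul_sub_one_le hα.1.le hα.2.le (L x)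
    simp only [slope_def_field, sub_zero, zero_mul, Real.exp_zero, norm_mul, norm_div,
      Real.norm_eq_abs, abs_of_pos hα.1, abs_of_pos (Real.exp_pos _), ← mul_add]
    gcongr
    rwa [div_le_iff₀' hα.1]
  · refine ae_of_all _ fun x => Tendsto.const_mul (q x) ?_
    have hderiv := ((hasDerivAt_mul_const (L x)).exp (x := 0)).tendsto_slope
    rw [zero_mul, Real.exp_zero, one_mul] at hderiv
    exact hderiv.mono_left (nhdsWithin_mono _ fun _ h => ne_of_gt h)

end

theorem alpha_divergence_tendsto_reverse_KL_general
    {X : Type*} [MeasurableSpace X] (μ : Measure X)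
    (p q : X → ℝ)
    (hp0 : ∀ᵐ x ∂μ, 0 < p x) (hq0 : ∀ᵐ x ∂μ, 0 < q x)
    (hpInt : Integrable p μ) (hqInt : Integrable q μ)
    (hq1 : ∫ x, q x ∂μ = 1)
    (hlog2 : Integrable (fun x => q x * (Real.log (q x / p x)) ^ 2) μ) :
    Tendsto
      (fun α : ℝ => (1 / (α * (1 - α))) * (1 - ∫ x, p x ^ α * q x ^ (1 - α) ∂μ))
      (nhdsWithin 0 (Set.Ioi 0))
      (nhds (∫ x, q x * Real.log (q x / p x) ∂μ)) := by
  set L : X → ℝ := fun x => Real.log (p x / q x)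
  set F : ℝ → ℝ := fun α => ∫ x, q x * Real.exp (α * L x) ∂μ
  have hlog_swap (x : X) : Real.log (q x / p x) = -L x := by rw [← Real.log_inv, inv_div]
  have hL : AEStronglyMeasurable L μ :=
    (hpInt.aemeasurable.div hqInt.aemeasurable).log.aestronglyMeasurable
  have hqexp : (fun x => q x * Real.exp (L x)) =ᵐ[μ] p := by
    filter_upwards [hp0, hq0] with x hpx hqx
    rw [Real.exp_log (div_pos hpx hqx), mul_div_cancel₀ _ hqx.ne']
  have hqL : Integrable (fun x => q x * L x) μ :=
    integrable_mul_of_integrable_mul_sq hL hqInt (by simpa only [hlog_swap, neg_sq] using hlog2)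
  have hslope := (hasDerivWithinAt_iff_tendsto_slope' self_notMem_Ioi).1
    (hasDerivWithinAt_integral_mul_exp_mul hL hqInt (hpInt.congr hqexp.symm) hqL)
  have hD : ∀ᶠ α in 𝓝[>] (0 : ℝ), (1 - α)⁻¹ * -slope F 0 α =
      (1 / (α * (1 - α))) * (1 - ∫ x, p x ^ α * q x ^ (1 - α) ∂μ) := by
    filter_upwards [Ioo_mem_nhdsGT one_pos] with α hα
    have hF : ∫ x, p x ^ α * q x ^ (1 - α) ∂μ = F α := integral_congr_ae <| by
      filter_upwards [hp0, hq0] with x hpx hqx using Real.rpow_mul_rpow_one_sub hpx hqx α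
    have hF0 : F 0 = 1 := by simpa [F] using hq1
    rw [hF, slope_def_field, hF0, sub_zero]
    field_simp [hα.1.ne', (sub_pos.2 hα.2).ne']
    ring
  have hinv : Tendsto (fun α : ℝ => (1 - α)⁻¹) (𝓝[>] 0) (𝓝 1) := by
    simpa using ((show Continuous fun α : ℝ => 1 - α by fun_prop).tendsto 0).inv₀ (by norm_num)
      |>.mono_left nhdsWithin_le_nhds
  simp only [hlog_swap, mul_neg, integral_neg]
  simpa using (hinv.mul hslope.neg).congr' hD

/-- **α → 0 limit of the α-divergence is the reverse KL divergence
(Eq. (27) of the paper).**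
`D_α[p‖q] = (1/(α(1−α)))(1 − ∫ p^α q^{1−α} dμ) → ∫ q log(q/p) dμ` as `α → 0⁺`. -/
theorem alpha_divergence_tendsto_reverse_KL
    {X : Type*} [MeasurableSpace X] (μ : Measure X) [SigmaFinite μ]
    (p q : X → ℝ) (hpm : Measurable p) (hqm : Measurable q)
    (hp0 : ∀ᵐ x ∂μ, 0 < p x) (hq0 : ∀ᵐ x ∂μ, 0 < q x)
    (hpInt : Integrable p μ) (hqInt : Integrable q μ)
    (hp1 : ∫ x, p x ∂μ = 1) (hq1 : ∫ x, q x ∂μ = 1)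
    (ε : ℝ) (hε : 0 < ε)
    (hmoment : Integrable (fun x => q x ^ (1 + ε) * p x ^ (-ε)) μ)
    (hlog2 : Integrable (fun x => q x * (Real.log (q x / p x)) ^ 2) μ) :
    Tendsto
      (fun α : ℝ => (1 / (α * (1 - α))) * (1 - ∫ x, p x ^ α * q x ^ (1 - α) ∂μ))
      (nhdsWithin 0 (Set.Ioi 0))
      (nhds (∫ x, q x * Real.log (q x / p x) ∂μ)) :=
  alpha_divergence_tendsto_reverse_KL_general μ p q hp0 hq0 hpInt hqInt hq1 hlog2
end
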